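/- arXiv:0707.2173 — 7 statements merged into one kernel-verified Lean document; each statement's English description precedes it below -/
import Mathlib

section
/- The blocks X_1 = {0,1,2,6,8,9,10,11,12,15,16,19,21,24,27,29,32,34,36,38} and X_2 = {0,1,4,5,11,17,18,25,34,37} in Z_48 form a (48;20,10;10) difference family: N_{X_1}(a) + N_{X_2}(a) = 10 for all nonzero a ∈ Z_48. -/
def N {v : ℕ} (X : Finset (ZMod v)) (a : ZMod v) : ℕ :=
  ((X ×ˢ X).filter (fun p => p.2 - p.1 = a)).card

theorem stmt11 : ∀ a : ZMod 48, a ≠ 0 →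
    N ({0,1,2,6,8,9,10,11,12,15,16,19,21,24,27,29,32,34,36,38} : Finset (ZMod 48)) a +
      N ({0,1,4,5,11,17,18,25,34,37} : Finset (ZMod 48)) a = 10 := by
  decide
end

section
/- The blocks X_1 = {0,1,2,4,5,6,8,9,11,13,15,16,18,19,21,24,27,28,31,32,33,38,39,40} and X_2 = {0,2,6,20} in Z_48 form a (48;24,4;12) difference family: N_{X_1}(a) + N_{X_2}(a) = 12 for all nonzero a ∈ Z_48. -/
theorem stmt12 : ∀ a : ZMod 48, a ≠ 0 →
    N ({0,1,2,4,5,6,8,9,11,13,15,16,18,19,21,24,27,28,31,32,33,38,39,40} : Finset (ZMod 48)) a +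
      N ({0,2,6,20} : Finset (ZMod 48)) a = 12 := by
  decide
end

section
/- The blocks X_1 = {0,1,2,3,5,6,7,9,10,11,13,15,17,20,22,23,26,27,28,29,31,36,38,39,45} and X_2 = {0,1,2,3,5,6,8,14,15,17,18,21,25,27,32,35,36,40,44,45} in Z_50 form a (50;25,20;20) difference family: N_{X_1}(a) + N_{X_2}(a) = 20 for all nonzero a ∈ Z_50. -/
theorem stmt13 : ∀ a : ZMod 50, a ≠ 0 →
    N ({0,1,2,3,5,6,7,9,10,11,13,15,17,20,22,23,26,27,28,29,31,36,38,39,45} : Finset (ZMod 50)) a +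
      N ({0,1,2,3,5,6,8,14,15,17,18,21,25,27,32,35,36,40,44,45} : Finset (ZMod 50)) a = 20 := by
  decide
end

section
/- More generally: if (X_1, X_2) is a (v;r,s;λ) difference family in Z_v with v = 2n where n = r + s - λ, then the two associated ±1-sequences (with -1 at positions in X_i) have periodic autocorrelations summing to zero at every nonzero shift. -/
lemma N_eq_filter {v : ℕ} (X : Finset (ZMod v)) (k : ZMod v) :
    N X k = (X.filter (fun j => j + k ∈ X)).card := by
  unfold N
  apply Finset.card_bij (fun p _ => p.1)
  · intro p hp
    simp only [Finset.mem_filter, Finset.mem_product] at hp ⊢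
    obtain ⟨⟨h1, h2⟩, h3⟩ := hp
    have : p.2 = p.1 + k := by rw [← h3]; ring
    exact ⟨h1, this ▸ h2⟩
  · intro p hp q hq hpq
    simp only [Finset.mem_filter, Finset.mem_product] at hp hq
    have h1 : p.2 = p.1 + k := by rw [← hp.2]; ring
    have h2 : q.2 = q.1 + k := by rw [← hq.2]; ring
    exact Prod.ext hpq (by rw [h1, h2, hpq])
  · intro j hj
    simp only [Finset.mem_filter] at hj
    exact ⟨(j, j + k), by simp [Finset.mem_filter, Finset.mem_product, hj.1, hj.2], rfl⟩

lemma key {v : ℕ} [NeZero v] (X : Finset (ZMod v)) (k : ZMod v) :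
    ∑ j : ZMod v, (if j ∈ X then (-1 : ℤ) else 1) * (if j + k ∈ X then (-1 : ℤ) else 1)
      = (v : ℤ) - 4 * X.card + 4 * N X k := by
  have step : ∀ j : ZMod v,
      (if j ∈ X then (-1 : ℤ) else 1) * (if j + k ∈ X then (-1 : ℤ) else 1)
      = 1 - 2 * (if j ∈ X then (1:ℤ) else 0) - 2 * (if j + k ∈ X then (1:ℤ) else 0)
        + 4 * (if j ∈ X ∧ j + k ∈ X then (1:ℤ) else 0) := by
    intro j
    by_cases h1 : j ∈ X <;> by_cases h2 : j + k ∈ X <;> simp [h1, h2]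
  simp only [step]
  rw [Finset.sum_add_distrib, Finset.sum_sub_distrib, Finset.sum_sub_distrib]
  rw [← Finset.mul_sum, ← Finset.mul_sum, ← Finset.mul_sum]
  have e1 : ∑ j : ZMod v, (if j ∈ X then (1:ℤ) else 0) = X.card := by
    rw [Finset.sum_ite_mem, Finset.univ_inter, Finset.sum_const]; simp
  have e2 : ∑ j : ZMod v, (if j + k ∈ X then (1:ℤ) else 0) = X.card := by
    rw [← e1]
    exact Fintype.sum_equiv (Equiv.addRight k) _ _ (fun j => rfl)
  have e3 : ∑ j : ZMod v, (if j ∈ X ∧ j + k ∈ X then (1:ℤ) else 0) = N X k := by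
    rw [N_eq_filter]
    rw [Finset.sum_boole]
    norm_cast
    congr 1
    rw [← Finset.filter_filter]
    congr 1
    ext j; simp
  rw [e1, e2, e3]
  rw [Finset.sum_const, Finset.card_univ, ZMod.card]
  ring

theorem stmt15 (v : ℕ) [NeZero v] (X₁ X₂ : Finset (ZMod v)) (r s lam n : ℕ)
    (hr : X₁.card = r) (hs : X₂.card = s) (hn : n = r + s - lam) (hlam : lam ≤ r + s)
    (hv : v = 2 * n)
    (h : ∀ a : ZMod v, a ≠ 0 → N X₁ a + N X₂ a = lam) :
    ∀ k : ZMod v, k ≠ 0 →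
      (∑ j : ZMod v, (if j ∈ X₁ then (-1 : ℤ) else 1) * (if j + k ∈ X₁ then (-1 : ℤ) else 1)) +
      (∑ j : ZMod v, (if j ∈ X₂ then (-1 : ℤ) else 1) * (if j + k ∈ X₂ then (-1 : ℤ) else 1)) = 0 := by
  intro k hk
  rw [key X₁ k, key X₂ k]
  have hNk := h k hk
  have : (N X₁ k : ℤ) + N X₂ k = lam := by exact_mod_cast hNk
  have hn' : (n : ℤ) = r + s - lam := by
    have h2 : lam + n = r + s := by omega
    have := congrArg (Nat.cast : ℕ → ℤ) h2
    push_cast at this; linarith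
  have hv' : (v : ℤ) = 2 * n := by exact_mod_cast hv
  rw [hr, hs]
  linarith
end

section
/- There is no (v;r,s;λ) difference family with parameters (45;7,2;1): no pair of subsets X_1, X_2 ⊆ Z_45 with |X_1| = 7, |X_2| = 2 satisfies N_{X_1}(a) + N_{X_2}(a) = 1 for all nonzero a ∈ Z_45. -/
/-- Attempt to add the new element `y` to the partial set `l`, updating the
difference bitmask; fails if a difference collision occurs. -/
def addDiffs (y : Nat) : List Nat → Nat → Option Nat :=
  List.rec (fun mask => some mask)
    (fun x _ ih mask =>
      let d := y - x
      if mask.testBit d then none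
      else ih (mask ||| (1 <<< d) ||| (1 <<< (45 - d))))

/-- Depth-first search for a Sidon set in `ZMod 45`: `go fuel xs mask k y` searches
for `k` further elements among `y,…,44` extending `xs` (difference mask `mask`). -/
def go : Nat → List Nat → Nat → Nat → Nat → Bool :=
  Nat.rec (fun _ _ _ _ => true)
    (fun _ ih xs mask need y =>
      Nat.rec true
        (fun need' _ =>
          if 45 - y < need' + 1 then false
          else
            ((addDiffs y xs mask).elim false (fun m => ih (y :: xs) m need' (y+1)))
              || ih xs mask (need'+1) (y+1))
        need)

lemma addDiffs_nil (y mask : ℕ) : addDiffs y [] mask = some mask := rfl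

lemma addDiffs_cons (y x : ℕ) (xs : List ℕ) (mask : ℕ) :
    addDiffs y (x :: xs) mask =
      if mask.testBit (y - x) then none
      else addDiffs y xs (mask ||| (1 <<< (y - x)) ||| (1 <<< (45 - (y - x)))) := rfl

lemma go_zero (xs : List ℕ) (mask k y : ℕ) : go 0 xs mask k y = true := rfl

lemma go_succ_zero (n : ℕ) (xs : List ℕ) (mask y : ℕ) : go (n+1) xs mask 0 y = true := rfl

lemma go_succ (n : ℕ) (xs : List ℕ) (mask k y : ℕ) :
    go (n+1) xs mask (k+1) y =
      if 45 - y < k + 1 then false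
      else
        ((addDiffs y xs mask).elim false (fun m => go n (y :: xs) m k (y+1)))
          || go n xs mask (k+1) (y+1) := rfl

/-- Sidon property: every nonzero difference arises from at most one ordered pair. -/
def SidonP (Y : Finset (ZMod 45)) : Prop :=
  ∀ p₁ q₁ p₂ q₂ : ZMod 45, p₁ ∈ Y → q₁ ∈ Y → p₂ ∈ Y → q₂ ∈ Y →
    q₁ - p₁ = q₂ - p₂ → q₁ - p₁ ≠ 0 → p₁ = p₂ ∧ q₁ = q₂

lemma cast_inj_45 {a b : ℕ} (ha : a < 45) (hb : b < 45)
    (h : (a : ZMod 45) = (b : ZMod 45)) : a = b := by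
  have := congrArg ZMod.val h
  rwa [ZMod.val_cast_of_lt ha, ZMod.val_cast_of_lt hb] at this

lemma cast_ne_zero_45 {d : ℕ} (h0 : 0 < d) (h45 : d < 45) : (d : ZMod 45) ≠ 0 := by
  intro h
  have : d = 0 := cast_inj_45 h45 (by norm_num) (by simpa using h)
  omega

/-- Invariant during `addDiffs`: every set bit corresponds to a genuine difference
of a pair from the target set, with the pairs `(x, y)` for unprocessed `x ∈ l` not yet recorded. -/
def AInv (l : List ℕ) (y mask : ℕ) (Y : Finset (ZMod 45)) : Prop :=
  ∀ d : ℕ, mask.testBit d = true → d < 45 ∧ ∃ p q : ZMod 45, p ∈ Y ∧ q ∈ Y ∧ p ≠ q ∧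
    q - p = (d : ZMod 45) ∧
    (∃ pn qn : ℕ, pn ≤ y ∧ qn ≤ y ∧ p = (pn : ZMod 45) ∧ q = (qn : ZMod 45)) ∧
    (∀ x ∈ l, ¬(p = (x : ZMod 45) ∧ q = (y : ZMod 45)))

/-- Invariant for `go`: bits of the mask are differences of pairs of naturals `< y`. -/
def GoInv (y mask : ℕ) (Y : Finset (ZMod 45)) : Prop :=
  ∀ d : ℕ, mask.testBit d = true → d < 45 ∧ ∃ p q : ZMod 45, p ∈ Y ∧ q ∈ Y ∧ p ≠ q ∧
    q - p = (d : ZMod 45) ∧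
    ∃ pn qn : ℕ, pn < y ∧ qn < y ∧ p = (pn : ZMod 45) ∧ q = (qn : ZMod 45)

lemma addDiffs_complete : ∀ (l : List ℕ) (mask : ℕ) (y : ℕ) (Y : Finset (ZMod 45)),
    SidonP Y → y < 45 → (∀ x ∈ l, x < y) → l.Nodup →
    (∀ x ∈ l, (x : ZMod 45) ∈ Y) → ((y : ZMod 45) ∈ Y) →
    AInv l y mask Y →
    ∃ m, addDiffs y l mask = some m ∧ AInv [] y m Y := by
  intro l
  induction l with
  | nil => exact fun mask y Y _ _ _ _ _ _ hinv => ⟨mask, rfl, hinv⟩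
  | cons x l ih =>
    intro mask y Y hS hy hlt hnd hmem hymem hinv
    have hxl : x ∈ x :: l := List.mem_cons_self
    have hx_lt : x < y := hlt x hxl
    have hd_pos : 0 < y - x := by omega
    have hd_lt : y - x < 45 := by omega
    have hxY : (x : ZMod 45) ∈ Y := hmem x hxl
    have hcast : (y : ZMod 45) - (x : ZMod 45) = ((y - x : ℕ) : ZMod 45) :=
      (Nat.cast_sub hx_lt.le).symm
    have hxyne : (x : ZMod 45) ≠ (y : ZMod 45) := by
      intro h; exact absurd (cast_inj_45 (by omega) hy h) (by omega)
    -- the bit for the new difference is unset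
    have hbit : mask.testBit (y - x) = false := by
      by_contra hb
      have hb' : mask.testBit (y - x) = true := by
        cases h : mask.testBit (y - x) with
        | false => exact absurd h hb
        | true => rfl
      obtain ⟨_, p, q, hpY, hqY, hpq, hdiff, _, hcl⟩ := hinv _ hb'
      have hne : ((y - x : ℕ) : ZMod 45) ≠ 0 := cast_ne_zero_45 hd_pos hd_lt
      have heq : q - p = (y : ZMod 45) - (x : ZMod 45) := by rw [hdiff, hcast]
      have := hS p q (x : ZMod 45) (y : ZMod 45) hpY hqY hxY hymem heq
        (by rw [hdiff]; exact hne)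
      exact hcl x hxl ⟨this.1.symm ▸ rfl, this.2.symm ▸ rfl⟩
    have hnd' : l.Nodup := (List.nodup_cons.mp hnd).2
    have hxnl : x ∉ l := (List.nodup_cons.mp hnd).1
    -- new invariant
    have hinv' : AInv l y (mask ||| (1 <<< (y - x)) ||| (1 <<< (45 - (y - x)))) Y := by
      intro e he
      rw [Nat.testBit_or, Nat.testBit_or] at he
      have h1 : (1 : ℕ) <<< (y - x) = 2 ^ (y - x) := by rw [Nat.shiftLeft_eq, one_mul]
      have h2 : (1 : ℕ) <<< (45 - (y - x)) = 2 ^ (45 - (y - x)) := by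
        rw [Nat.shiftLeft_eq, one_mul]
      rw [h1, h2, Nat.testBit_two_pow, Nat.testBit_two_pow] at he
      rcases Bool.or_eq_true_iff.mp he with he | he
      rcases Bool.or_eq_true_iff.mp he with he | he
      · -- old bit
        obtain ⟨helt, p, q, hpY, hqY, hpq, hdiff, hbnd, hcl⟩ := hinv e he
        exact ⟨helt, p, q, hpY, hqY, hpq, hdiff, hbnd,
          fun x' hx' => hcl x' (List.mem_cons_of_mem x hx')⟩
      · -- bit (y - x) : pair (x, y)
        have hde : y - x = e := of_decide_eq_true he
        subst hde
        refine ⟨hd_lt, (x : ZMod 45), (y : ZMod 45), hxY, hymem, hxyne, hcast,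
          ⟨x, y, hx_lt.le, le_rfl, rfl, rfl⟩, ?_⟩
        intro x' hx' hc
        have : x = x' := cast_inj_45 (by omega) (by have := hlt x' (List.mem_cons_of_mem x hx'); omega) hc.1
        exact hxnl (this ▸ hx')
      · -- bit (45 - (y - x)) : pair (y, x)
        have hde : 45 - (y - x) = e := of_decide_eq_true he
        subst hde
        refine ⟨by omega, (y : ZMod 45), (x : ZMod 45), hymem, hxY, fun h => hxyne h.symm, ?_,
          ⟨y, x, le_rfl, hx_lt.le, rfl, rfl⟩, ?_⟩
        · rw [Nat.cast_sub (by omega : y - x ≤ 45), ZMod.natCast_self, ← hcast]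
          ring
        · intro x' hx' hc
          exact hxyne hc.2
    obtain ⟨m, hm, hminv⟩ := ih _ y Y hS hy
      (fun z hz => hlt z (List.mem_cons_of_mem x hz)) hnd'
      (fun z hz => hmem z (List.mem_cons_of_mem x hz)) hymem hinv'
    refine ⟨m, ?_, hminv⟩
    rw [addDiffs_cons, hbit]
    simpa using hm

lemma go_complete : ∀ (fuel : ℕ) (xs : List ℕ) (mask k y : ℕ) (rest : Finset ℕ)
    (Y : Finset (ZMod 45)), SidonP Y →
    46 ≤ fuel + y → y ≤ 45 →
    (∀ x ∈ xs, x < y) → xs.Nodup → (∀ x ∈ xs, (x : ZMod 45) ∈ Y) →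
    (∀ z ∈ rest, y ≤ z ∧ z < 45) → (∀ z ∈ rest, (z : ZMod 45) ∈ Y) →
    rest.card = k → GoInv y mask Y →
    go fuel xs mask k y = true := by
  intro fuel
  induction fuel with
  | zero => intro xs mask k y rest Y _ hf hy _ _ _ _ _ _ _; omega
  | succ fuel ih =>
    intro xs mask k y rest Y hS hf hy hxlt hnd hxY hr hrY hcard hinv
    cases k with
    | zero => exact go_succ_zero fuel xs mask y
    | succ k =>
      -- rest has k+1 distinct elements in [y, 45)
      have hsub : rest ⊆ Finset.Ico y 45 := fun z hz =>
        Finset.mem_Ico.mpr ⟨(hr z hz).1, (hr z hz).2⟩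
      have hguard : ¬ (45 - y < k + 1) := by
        have := Finset.card_le_card hsub
        rw [hcard, Nat.card_Ico] at this
        omega
      have hylt : y < 45 := by omega
      have hne : rest.Nonempty := Finset.card_pos.mp (by omega)
      rw [go_succ, if_neg hguard]
      by_cases hyr : y ∈ rest
      · -- take branch: add y
        have hAinv : AInv xs y mask Y := by
          intro d hd
          obtain ⟨hdlt, p, q, hpY, hqY, hpq, hdiff, pn, qn, hpn, hqn, hp, hq⟩ := hinv d hd
          refine ⟨hdlt, p, q, hpY, hqY, hpq, hdiff, ⟨pn, qn, by omega, by omega, hp, hq⟩, ?_⟩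
          intro x hx hc
          have : qn = y := cast_inj_45 (by omega) hylt (hq ▸ hc.2)
          omega
        obtain ⟨m, hm, hminv⟩ := addDiffs_complete xs mask y Y hS hylt hxlt hnd hxY
          (hrY y hyr) hAinv
        have hleft : go fuel (y :: xs) m k (y+1) = true := by
          apply ih (y :: xs) m k (y+1) (rest.erase y) Y hS (by omega) (by omega)
          · intro x hx
            rcases List.mem_cons.mp hx with h | h
            · omega
            · have := hxlt x h; omega
          · exact List.nodup_cons.mpr ⟨fun h => absurd (hxlt y h) (by omega), hnd⟩
          · intro x hx
            rcases List.mem_cons.mp hx with h | h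
            · exact h ▸ hrY y hyr
            · exact hxY x h
          · intro z hz
            have hz' := Finset.mem_of_mem_erase hz
            have hzy : z ≠ y := Finset.ne_of_mem_erase hz
            have := hr z hz'
            omega
          · exact fun z hz => hrY z (Finset.mem_of_mem_erase hz)
          · rw [Finset.card_erase_of_mem hyr, hcard]; omega
          · intro d hd
            obtain ⟨hdlt, p, q, hpY, hqY, hpq, hdiff, ⟨pn, qn, hpn, hqn, hp, hq⟩, _⟩ :=
              hminv d hd
            exact ⟨hdlt, p, q, hpY, hqY, hpq, hdiff, pn, qn, by omega, by omega, hp, hq⟩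
        rw [hm, Option.elim_some, hleft, Bool.true_or]
      · -- skip branch
        have hright : go fuel xs mask (k+1) (y+1) = true := by
          apply ih xs mask (k+1) (y+1) rest Y hS (by omega) (by omega)
            (fun x hx => by have := hxlt x hx; omega) hnd hxY
          · intro z hz
            have := hr z hz
            have : y ≠ z := fun h => hyr (h ▸ hz)
            omega
          · exact hrY
          · exact hcard
          · intro d hd
            obtain ⟨hdlt, p, q, hpY, hqY, hpq, hdiff, pn, qn, hpn, hqn, hp, hq⟩ := hinv d hd
            exact ⟨hdlt, p, q, hpY, hqY, hpq, hdiff, pn, qn, by omega, by omega, hp, hq⟩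
        rw [hright, Bool.or_true]

set_option maxHeartbeats 12000000 in
lemma search_false : go 60 [1, 0] ((1 <<< 1) ||| (1 <<< 44)) 5 2 = false := by decide

lemma sidon_of_N (X : Finset (ZMod 45)) (h : ∀ a : ZMod 45, a ≠ 0 → N X a ≤ 1) :
    SidonP X := by
  intro p₁ q₁ p₂ q₂ h₁ h₂ h₃ h₄ heq hne
  have hm₁ : (p₁, q₁) ∈ (X ×ˢ X).filter (fun p => p.2 - p.1 = q₁ - p₁) := by
    simp [Finset.mem_filter, Finset.mem_product, h₁, h₂]
  have hm₂ : (p₂, q₂) ∈ (X ×ˢ X).filter (fun p => p.2 - p.1 = q₁ - p₁) := by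
    simp [Finset.mem_filter, Finset.mem_product, h₃, h₄, heq.symm]
  have := Finset.card_le_one.mp (h _ hne) _ hm₁ _ hm₂
  exact ⟨congrArg Prod.fst this, congrArg Prod.snd this⟩

lemma exists_pair_of_N {X : Finset (ZMod 45)} {a : ZMod 45} (h : N X a ≠ 0) :
    ∃ p ∈ X, ∃ q ∈ X, q - p = a := by
  obtain ⟨⟨p, q⟩, hm⟩ := Finset.card_pos.mp (Nat.pos_of_ne_zero h)
  rw [Finset.mem_filter, Finset.mem_product] at hm
  exact ⟨p, hm.1.1, q, hm.1.2, hm.2⟩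

theorem stmt17 : ¬ ∃ X₁ X₂ : Finset (ZMod 45),
    X₁.card = 7 ∧ X₂.card = 2 ∧ ∀ a : ZMod 45, a ≠ 0 → N X₁ a + N X₂ a = 1 := by
  rintro ⟨X₁, X₂, h1, h2, hN⟩
  have hS1 : SidonP X₁ := sidon_of_N X₁ (fun a ha => by have := hN a ha; omega)
  -- X₂ cannot have both 1 and 2 as differences
  have hX2 : N X₂ 1 = 0 ∨ N X₂ 2 = 0 := by
    by_contra hc
    push_neg at hc
    obtain ⟨a, haX, b, hbX, hba⟩ := exists_pair_of_N hc.1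
    obtain ⟨c, hcX, d, hdX, hdc⟩ := exists_pair_of_N hc.2
    have hb : b = a + 1 := by linear_combination hba
    subst hb
    have hane : a ∉ ({a + 1} : Finset (ZMod 45)) := by
      simp only [Finset.mem_singleton]
      intro h; exact absurd (by linear_combination -h : (1 : ZMod 45) = 0) (by decide)
    have hsub : ({a, a + 1} : Finset (ZMod 45)) ⊆ X₂ := by
      intro z hz
      rcases Finset.mem_insert.mp hz with h | h
      · exact h ▸ haX
      · exact (Finset.mem_singleton.mp h) ▸ hbX
    have hcardi : ({a, a + 1} : Finset (ZMod 45)).card = 2 := by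
      rw [Finset.card_insert_of_notMem hane, Finset.card_singleton]
    have hX2eq : ({a, a + 1} : Finset (ZMod 45)) = X₂ :=
      Finset.eq_of_subset_of_card_le hsub (by omega)
    rw [← hX2eq] at hcX hdX
    rcases Finset.mem_insert.mp hcX with hc1 | hc1 <;>
      rcases Finset.mem_insert.mp hdX with hd1 | hd1 <;>
      rw [Finset.mem_singleton] at * <;> subst hc1 <;> subst hd1
    · exact absurd (by linear_combination hdc : (0 : ZMod 45) = 2) (by decide)
    · exact absurd (by linear_combination hdc : (1 : ZMod 45) = 2) (by decide)
    · exact absurd (by linear_combination hdc : (-1 : ZMod 45) = 2) (by decide)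
    · exact absurd (by linear_combination hdc : (0 : ZMod 45) = 2) (by decide)
  -- X₁ has a pair with difference 1 or 2
  have hpair : ∃ x₁ ∈ X₁, ∃ x₂ ∈ X₁, ∃ u c : ZMod 45, x₂ - x₁ = c ∧ u * c = 1 := by
    have e1 := hN 1 (by decide)
    have e2 := hN 2 (by decide)
    rcases hX2 with h | h
    · have : N X₁ 1 ≠ 0 := by omega
      obtain ⟨p, hp, q, hq, hqp⟩ := exists_pair_of_N this
      exact ⟨p, hp, q, hq, 1, 1, hqp, by decide⟩
    · have : N X₁ 2 ≠ 0 := by omega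
      obtain ⟨p, hp, q, hq, hqp⟩ := exists_pair_of_N this
      exact ⟨p, hp, q, hq, 23, 2, hqp, by decide⟩
  obtain ⟨x₁, hx₁, x₂, hx₂, u, c, hdiff, huc⟩ := hpair
  have hcu : c * u = 1 := by rw [mul_comm]; exact huc
  -- normalized set Y
  set f : ZMod 45 → ZMod 45 := fun z => u * (z - x₁) with hf
  have hinj : Function.Injective f := by
    intro a b hab
    have hab' : u * (a - x₁) = u * (b - x₁) := hab
    have : c * (u * (a - x₁)) = c * (u * (b - x₁)) := by rw [hab']
    rw [← mul_assoc, ← mul_assoc, hcu, one_mul, one_mul] at this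
    exact sub_left_inj.mp this
  set Y : Finset (ZMod 45) := X₁.image f with hY
  have hYcard : Y.card = 7 := by rw [hY, Finset.card_image_of_injective _ hinj, h1]
  have h0Y : (0 : ZMod 45) ∈ Y := by
    rw [hY, Finset.mem_image]
    exact ⟨x₁, hx₁, show u * (x₁ - x₁) = 0 by rw [sub_self, mul_zero]⟩
  have h1Y : (1 : ZMod 45) ∈ Y := by
    rw [hY, Finset.mem_image]
    exact ⟨x₂, hx₂, show u * (x₂ - x₁) = 1 by rw [hdiff, huc]⟩
  have hSY : SidonP Y := by
    intro p₁ q₁ p₂ q₂ hm₁ hm₂ hm₃ hm₄ heq hne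
    rw [hY, Finset.mem_image] at hm₁ hm₂ hm₃ hm₄
    obtain ⟨a₁, ha₁, rfl⟩ := hm₁
    obtain ⟨b₁, hb₁, rfl⟩ := hm₂
    obtain ⟨a₂, ha₂, rfl⟩ := hm₃
    obtain ⟨b₂, hb₂, rfl⟩ := hm₄
    have hde : ∀ a b : ZMod 45, f b - f a = u * (b - a) := fun a b =>
      show u * (b - x₁) - u * (a - x₁) = u * (b - a) by ring
    rw [hde, hde] at heq
    rw [hde] at hne
    have heq' : b₁ - a₁ = b₂ - a₂ := by
      have : c * (u * (b₁ - a₁)) = c * (u * (b₂ - a₂)) := by rw [heq]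
      rwa [← mul_assoc, ← mul_assoc, hcu, one_mul, one_mul] at this
    have hne' : b₁ - a₁ ≠ 0 := fun h => hne (by rw [h, mul_zero])
    obtain ⟨hpa, hpb⟩ := hS1 a₁ b₁ a₂ b₂ ha₁ hb₁ ha₂ hb₂ heq' hne'
    exact ⟨by rw [hpa], by rw [hpb]⟩
  -- build rest
  set rest : Finset ℕ := ((Y.erase 0).erase 1).image ZMod.val with hrest
  have hvinj : Function.Injective (ZMod.val (n := 45)) := ZMod.val_injective 45
  have h1e : (1 : ZMod 45) ∈ Y.erase 0 := Finset.mem_erase.mpr ⟨by decide, h1Y⟩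
  have hrcard : rest.card = 5 := by
    rw [hrest, Finset.card_image_of_injective _ hvinj,
      Finset.card_erase_of_mem h1e, Finset.card_erase_of_mem h0Y, hYcard]
  have hrmem : ∀ z ∈ rest, 2 ≤ z ∧ z < 45 ∧ (z : ZMod 45) ∈ Y := by
    intro z hz
    rw [hrest, Finset.mem_image] at hz
    obtain ⟨v, hv, rfl⟩ := hz
    have hv1 : v ≠ 1 := (Finset.mem_erase.mp hv).1
    have hv0 : v ≠ 0 := (Finset.mem_erase.mp (Finset.mem_of_mem_erase hv)).1
    have hvY : v ∈ Y := Finset.mem_of_mem_erase (Finset.mem_of_mem_erase hv)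
    have hvlt : v.val < 45 := ZMod.val_lt v
    have hcast : ((v.val : ℕ) : ZMod 45) = v := ZMod.natCast_rightInverse v
    refine ⟨?_, hvlt, by rw [hcast]; exact hvY⟩
    rcases Nat.lt_or_ge v.val 2 with h | h
    · exfalso
      have h01 : v.val = 0 ∨ v.val = 1 := by omega
      rcases h01 with h0 | h0
      · exact hv0 (hcast.symm.trans (by rw [h0]; simp))
      · exact hv1 (hcast.symm.trans (by rw [h0]; simp))
    · exact h
  -- initial mask invariant
  have hGoInv : GoInv 2 ((1 <<< 1) ||| (1 <<< 44)) Y := by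
    intro d hd
    rw [Nat.testBit_or] at hd
    have h1 : (1 : ℕ) <<< 1 = 2 ^ 1 := by rw [Nat.shiftLeft_eq, one_mul]
    have h2 : (1 : ℕ) <<< 44 = 2 ^ 44 := by rw [Nat.shiftLeft_eq, one_mul]
    rw [h1, h2, Nat.testBit_two_pow, Nat.testBit_two_pow] at hd
    rcases Bool.or_eq_true_iff.mp hd with he | he
    · have : (1 : ℕ) = d := of_decide_eq_true he
      subst this
      exact ⟨by norm_num, 0, 1, h0Y, h1Y, by decide, by simp, ⟨0, 1, by norm_num,
        by norm_num, by simp, by simp⟩⟩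
    · have : (44 : ℕ) = d := of_decide_eq_true he
      subst this
      exact ⟨by norm_num, 1, 0, h1Y, h0Y, by decide, by decide, ⟨1, 0, by norm_num,
        by norm_num, by simp, by simp⟩⟩
  have htrue : go 60 [1, 0] ((1 <<< 1) ||| (1 <<< 44)) 5 2 = true := by
    apply go_complete 60 [1, 0] _ 5 2 rest Y hSY (by norm_num) (by norm_num)
    · intro x hx
      rcases List.mem_cons.mp hx with h | h
      · omega
      · rcases List.mem_cons.mp h with h | h
        · omega
        · exact absurd h List.not_mem_nil
    · exact List.nodup_cons.mpr ⟨by simp, List.nodup_singleton 0⟩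
    · intro x hx
      rcases List.mem_cons.mp hx with h | h
      · subst h; simpa using h1Y
      · rcases List.mem_cons.mp h with h | h
        · subst h; simpa using h0Y
        · exact absurd h List.not_mem_nil
    · exact fun z hz => ⟨(hrmem z hz).1, (hrmem z hz).2.1⟩
    · exact fun z hz => (hrmem z hz).2.2
    · exact hrcard
    · exact hGoInv
  rw [search_false] at htrue
  exact Bool.false_ne_true htrue
end

section
/- There is no (14;5,3;2) difference family in Z_14: no subsets X_1, X_2 ⊆ Z_14 with |X_1| = 5, |X_2| = 3 satisfy N_{X_1}(a) + N_{X_2}(a) = 2 for all nonzero a ∈ Z_14. -/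
namespace Aux18

def f : ZMod 14 → ZMod 2 := fun a => (a.val : ZMod 2)

def E : Finset (ZMod 14) := {2, 4, 6, 8, 10, 12}

lemma f_sub (a b : ZMod 14) : f (a - b) = f a - f b := by revert a b; decide

lemma mem_E_iff (a : ZMod 14) : a ∈ E ↔ a ≠ 0 ∧ f a = 0 := by revert a; decide

lemma two_cases (z : ZMod 2) : z = 0 ∨ z = 1 := by revert z; decide

lemma diag_card (X : Finset (ZMod 14)) :
    ((X ×ˢ X).filter (fun p => p.2 = p.1)).card = X.card := by
  apply Finset.card_bij (fun p _ => p.1)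
  · intro p hp
    simp only [Finset.mem_filter, Finset.mem_product] at hp
    exact hp.1.1
  · intro p hp q hq h
    simp only [Finset.mem_filter, Finset.mem_product] at hp hq
    exact Prod.ext h (by rw [hp.2, hq.2, h])
  · intro x hx
    exact ⟨(x, x), by simp [hx], rfl⟩

lemma same_card (X : Finset (ZMod 14)) :
    ((X ×ˢ X).filter (fun p => f p.2 = f p.1)).card
      = (X.filter (fun x => f x = 0)).card ^ 2 + (X.filter (fun x => f x = 1)).card ^ 2 := by
  have hset : (X ×ˢ X).filter (fun p => f p.2 = f p.1)
      = (X.filter (fun x => f x = 0)) ×ˢ (X.filter (fun x => f x = 0))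
        ∪ (X.filter (fun x => f x = 1)) ×ˢ (X.filter (fun x => f x = 1)) := by
    ext p
    simp only [Finset.mem_filter, Finset.mem_product, Finset.mem_union]
    rcases two_cases (f p.1) with h1 | h1 <;> rcases two_cases (f p.2) with h2 | h2 <;>
      simp [h1, h2] <;> tauto
  rw [hset, Finset.card_union_of_disjoint, Finset.card_product, Finset.card_product, sq, sq]
  refine Finset.disjoint_left.2 ?_
  intro p hp hq
  simp only [Finset.mem_filter, Finset.mem_product] at hp hq
  rw [hp.1.2] at hq
  exact absurd hq.1.2 (by decide)

lemma split_card (X : Finset (ZMod 14)) :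
    ((X ×ˢ X).filter (fun p => f p.2 = f p.1)).card
      = ((X ×ˢ X).filter (fun p => p.2 - p.1 ∈ E)).card + X.card := by
  have h1 : (X ×ˢ X).filter (fun p => f p.2 = f p.1)
      = ((X ×ˢ X).filter (fun p => p.2 - p.1 ∈ E))
        ∪ ((X ×ˢ X).filter (fun p => p.2 = p.1)) := by
    ext p
    simp only [Finset.mem_filter, Finset.mem_product, Finset.mem_union, mem_E_iff,
      ne_eq, sub_eq_zero, f_sub]
    constructor
    · rintro ⟨hX, h⟩
      by_cases hd : p.2 = p.1
      · exact Or.inr ⟨hX, hd⟩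
      · exact Or.inl ⟨hX, hd, h⟩
    · rintro (⟨hX, _, h⟩ | ⟨hX, h⟩)
      · exact ⟨hX, h⟩
      · exact ⟨hX, by rw [h]⟩
  rw [h1, Finset.card_union_of_disjoint, diag_card]
  refine Finset.disjoint_left.2 ?_
  intro p hp hq
  simp only [Finset.mem_filter, mem_E_iff, ne_eq, sub_eq_zero] at hp hq
  exact hp.2.1 hq.2

lemma sum_N (X : Finset (ZMod 14)) :
    ∑ a ∈ E, N X a + X.card
      = (X.filter (fun x => f x = 0)).card ^ 2 + (X.filter (fun x => f x = 1)).card ^ 2 := by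
  have key : ∑ a ∈ E, N X a = ((X ×ˢ X).filter (fun p => p.2 - p.1 ∈ E)).card := by
    have hf := Finset.card_eq_sum_card_fiberwise
      (s := (X ×ˢ X).filter (fun p => p.2 - p.1 ∈ E)) (t := E)
      (f := fun p => p.2 - p.1) (fun p hp => (Finset.mem_filter.1 hp).2)
    rw [hf]
    refine Finset.sum_congr rfl fun a ha => ?_
    unfold N
    congr 1
    ext p
    simp only [Finset.mem_filter, Finset.mem_product, and_assoc]
    constructor
    · rintro ⟨h1, h2, h4⟩; exact ⟨h1, h2, h4 ▸ ha, h4⟩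
    · rintro ⟨h1, h2, _, h4⟩; exact ⟨h1, h2, h4⟩
  rw [key, ← split_card, same_card]

lemma filter_split (X : Finset (ZMod 14)) :
    (X.filter (fun x => f x = 0)).card + (X.filter (fun x => f x = 1)).card = X.card := by
  have hf : X.filter (fun x => ¬ f x = 0) = X.filter (fun x => f x = 1) := by
    ext x
    rcases two_cases (f x) with h | h <;> simp [h]
  rw [← hf]
  exact Finset.card_filter_add_card_filter_not (p := fun x => f x = 0)

lemma exists_parity (X : Finset (ZMod 14)) :
    ∃ c0 c1 : ℕ, c0 + c1 = X.card ∧ ∑ a ∈ E, N X a + X.card = c0 ^ 2 + c1 ^ 2 :=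
  ⟨_, _, filter_split X, sum_N X⟩

end Aux18

theorem stmt18 : ¬ ∃ X₁ X₂ : Finset (ZMod 14),
    X₁.card = 5 ∧ X₂.card = 3 ∧ ∀ a : ZMod 14, a ≠ 0 → N X₁ a + N X₂ a = 2 := by
  rintro ⟨X₁, X₂, h1, h2, h⟩
  have hsum : ∑ a ∈ Aux18.E, (N X₁ a + N X₂ a) = 12 := by
    rw [Finset.sum_congr rfl (fun a ha => h a ((Aux18.mem_E_iff a).1 ha).1)]
    decide
  rw [Finset.sum_add_distrib] at hsum
  obtain ⟨c0, c1, s1, e1⟩ := Aux18.exists_parity X₁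
  obtain ⟨d0, d1, s2, e2⟩ := Aux18.exists_parity X₂
  rw [h1] at e1 s1
  rw [h2] at e2 s2
  have hc0 : c0 ≤ 5 := by omega
  have hd0 : d0 ≤ 3 := by omega
  have hc1 : c1 = 5 - c0 := by omega
  have hd1 : d1 = 3 - d0 := by omega
  subst hc1 hd1
  interval_cases c0 <;> interval_cases d0 <;> simp_all <;> omega
end

section
/- If v is even and (X_1,...,X_m) is a difference family in Z_v with index λ such that m·v = 4n, where n = Σ|X_i| - λ, then (X_1^†,...,X_m^†) is also a difference family, where X^† denotes the symmetric difference of X with the set of odd residues in Z_v. -/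
open Finset

/-- signed indicator: -1 on X, 1 off X -/
def sg {v : ℕ} (X : Finset (ZMod v)) (x : ZMod v) : ℤ :=
  if x ∈ X then -1 else 1

/-- autocorrelation of the signed indicator -/
def Cc {v : ℕ} [NeZero v] (X : Finset (ZMod v)) (a : ZMod v) : ℤ :=
  ∑ x : ZMod v, sg X x * sg X (x + a)

lemma N_card {v : ℕ} [NeZero v] (X : Finset (ZMod v)) (a : ZMod v) :
    N X a = (univ.filter (fun x : ZMod v => x ∈ X ∧ x + a ∈ X)).card := by
  unfold N
  apply Finset.card_bij' (fun p _ => p.1) (fun x _ => (x, x + a))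
  · intro p hp
    simp only [Finset.mem_filter, Finset.mem_product] at hp ⊢
    obtain ⟨⟨h1, h2⟩, h3⟩ := hp
    have : p.2 = p.1 + a := by rw [← h3]; ring
    exact ⟨Finset.mem_univ _, h1, this ▸ h2⟩
  · intro x hx
    simp only [Finset.mem_filter, Finset.mem_univ, true_and] at hx
    simp [Finset.mem_filter, Finset.mem_product, hx.1, hx.2]
  · intro p hp
    simp only [Finset.mem_filter, Finset.mem_product] at hp
    have : p.2 = p.1 + a := by rw [← hp.2]; ring
    simp [← this]
  · intro x hx; rfl

lemma sum_sg_shift {v : ℕ} [NeZero v] (X : Finset (ZMod v)) (a : ZMod v) :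
    ∑ x : ZMod v, sg X (x + a) = ∑ x : ZMod v, sg X x :=
  Fintype.sum_equiv (Equiv.addRight a) _ _ (fun _ => rfl)

lemma four_N {v : ℕ} [NeZero v] (X : Finset (ZMod v)) (a : ZMod v) :
    (4 : ℤ) * N X a = v - 2 * (∑ x : ZMod v, sg X x) + Cc X a := by
  have h1 : ((N X a : ℤ)) = ∑ x : ZMod v, (if x ∈ X ∧ x + a ∈ X then (1:ℤ) else 0) := by
    rw [N_card, Finset.sum_boole]
  have key : ∀ x : ZMod v, 4 * (if x ∈ X ∧ x + a ∈ X then (1:ℤ) else 0)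
      = 1 - sg X x - sg X (x + a) + sg X x * sg X (x + a) := by
    intro x
    by_cases hx : x ∈ X <;> by_cases hy : x + a ∈ X <;> simp [sg, hx, hy] <;> ring
  calc (4 : ℤ) * N X a
      = ∑ x : ZMod v, 4 * (if x ∈ X ∧ x + a ∈ X then (1:ℤ) else 0) := by
        rw [h1, Finset.mul_sum]
    _ = ∑ x : ZMod v, (1 - sg X x - sg X (x + a) + sg X x * sg X (x + a)) := by
        exact Finset.sum_congr rfl (fun x _ => key x)
    _ = (∑ _x : ZMod v, (1:ℤ)) - (∑ x : ZMod v, sg X x) - (∑ x : ZMod v, sg X (x + a))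
          + ∑ x : ZMod v, sg X x * sg X (x + a) := by
        rw [Finset.sum_add_distrib, Finset.sum_sub_distrib, Finset.sum_sub_distrib]
    _ = v - 2 * (∑ x : ZMod v, sg X x) + Cc X a := by
        rw [sum_sg_shift, Finset.sum_const, Finset.card_univ, ZMod.card]
        unfold Cc; ring

lemma sum_sg_eq {v : ℕ} [NeZero v] (X : Finset (ZMod v)) :
    ∑ x : ZMod v, sg X x = (v : ℤ) - 2 * X.card := by
  have : ∀ x : ZMod v, sg X x = 1 - 2 * (if x ∈ X then (1:ℤ) else 0) := by
    intro x; by_cases hx : x ∈ X <;> simp [sg, hx]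
  rw [Finset.sum_congr rfl (fun x _ => this x), Finset.sum_sub_distrib, ← Finset.mul_sum,
    Finset.sum_boole, Finset.sum_const, Finset.card_univ, ZMod.card]
  congr 2
  · simp
  · congr 1
    rw [Finset.filter_mem_eq_inter, Finset.univ_inter]

lemma sg_symmDiff {v : ℕ} (X O : Finset (ZMod v)) (x : ZMod v) :
    sg (symmDiff X O) x = sg X x * sg O x := by
  by_cases hx : x ∈ X <;> by_cases ho : x ∈ O <;>
    simp [sg, Finset.mem_symmDiff, hx, ho]

lemma val_add_mod_two {v : ℕ} [NeZero v] (hv : Even v) (x a : ZMod v) :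
    (x + a).val % 2 = (x.val + a.val) % 2 := by
  rw [ZMod.val_add]
  exact Nat.mod_mod_of_dvd _ hv.two_dvd

lemma Cc_symmDiff {v : ℕ} [NeZero v] (hv : Even v) (X : Finset (ZMod v)) (a : ZMod v) :
    Cc (symmDiff X (Finset.univ.filter (fun x : ZMod v => x.val % 2 = 1))) a
      = (if a.val % 2 = 1 then -1 else 1) * Cc X a := by
  set O := Finset.univ.filter (fun x : ZMod v => x.val % 2 = 1) with hO
  have hmem : ∀ x : ZMod v, x ∈ O ↔ x.val % 2 = 1 := by
    intro x; simp [hO]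
  have hω : ∀ x : ZMod v, sg O x * sg O (x + a) = (if a.val % 2 = 1 then (-1:ℤ) else 1) := by
    intro x
    have hxa := val_add_mod_two hv x a
    rcases Nat.mod_two_eq_zero_or_one x.val with hx | hx <;>
      rcases Nat.mod_two_eq_zero_or_one a.val with ha | ha <;>
      · have hxa2 : (x + a).val % 2 = (x.val % 2 + a.val % 2) % 2 := by
          rw [hxa, Nat.add_mod]
        rw [hx, ha] at hxa2
        norm_num at hxa2
        simp [sg, hmem, hx, ha, hxa2]
  unfold Cc
  rw [Finset.mul_sum]
  apply Finset.sum_congr rfl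
  intro x _
  rw [sg_symmDiff, sg_symmDiff]
  calc sg X x * sg O x * (sg X (x + a) * sg O (x + a))
      = (sg O x * sg O (x + a)) * (sg X x * sg X (x + a)) := by ring
    _ = (if a.val % 2 = 1 then -1 else 1) * (sg X x * sg X (x + a)) := by rw [hω]

theorem stmt19 (v : ℕ) [NeZero v] (hv : Even v) (m : ℕ)
    (X : Fin m → Finset (ZMod v)) (lam : ℕ)
    (h : ∀ a : ZMod v, a ≠ 0 → ∑ i, N (X i) a = lam)
    (hn : (m * v : ℤ) = 4 * ((∑ i, ((X i).card : ℤ)) - lam)) :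
    ∃ μ : ℕ, ∀ a : ZMod v, a ≠ 0 →
      ∑ i, N (symmDiff (X i) (Finset.univ.filter (fun x : ZMod v => x.val % 2 = 1))) a = μ := by
  set O := Finset.univ.filter (fun x : ZMod v => x.val % 2 = 1) with hO
  -- sum of Cc over the family vanishes at every nonzero a
  have hCc : ∀ a : ZMod v, a ≠ 0 → ∑ i, Cc (X i) a = 0 := by
    intro a ha
    have h4 : (4 : ℤ) * ∑ i, (N (X i) a : ℤ)
        = m * v - 2 * (m * v - 2 * ∑ i, ((X i).card : ℤ)) + ∑ i, Cc (X i) a := by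
      rw [Finset.mul_sum]
      rw [Finset.sum_congr rfl (fun i _ => four_N (X i) a)]
      rw [Finset.sum_add_distrib, Finset.sum_sub_distrib, ← Finset.mul_sum,
        Finset.sum_congr rfl (fun i (_ : i ∈ Finset.univ) => sum_sg_eq (X i)),
        Finset.sum_sub_distrib, ← Finset.mul_sum]
      simp [Finset.sum_const, Finset.card_univ, mul_comm]
    have hsum : ∑ i, (N (X i) a : ℤ) = (lam : ℤ) := by
      rw [← Nat.cast_sum, h a ha]
    rw [hsum] at h4
    linarith
  -- the transformed sum is determined by a quantity independent of a
  have key : ∀ a : ZMod v, a ≠ 0 →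
      (4 : ℤ) * ∑ i, (N (symmDiff (X i) O) a : ℤ)
        = m * v - 2 * ∑ i, ∑ x : ZMod v, sg (symmDiff (X i) O) x := by
    intro a ha
    rw [Finset.mul_sum, Finset.sum_congr rfl (fun i _ => four_N (symmDiff (X i) O) a)]
    rw [Finset.sum_add_distrib, Finset.sum_sub_distrib, ← Finset.mul_sum]
    have : ∑ i, Cc (symmDiff (X i) O) a = 0 := by
      rw [Finset.sum_congr rfl (fun i (_ : i ∈ Finset.univ) => Cc_symmDiff hv (X i) a),
        ← Finset.mul_sum, hCc a ha, mul_zero]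
    rw [this, add_zero]
    simp [Finset.sum_const, Finset.card_univ, mul_comm]
  have hv1 : 1 < v := by
    rcases Nat.lt_or_ge v 2 with h2 | h2
    · interval_cases v
      · exact absurd rfl (NeZero.ne 0)
      · exact absurd hv (by decide)
    · omega
  haveI : Fact (1 < v) := ⟨hv1⟩
  have hone : (1 : ZMod v) ≠ 0 := one_ne_zero
  refine ⟨∑ i, N (symmDiff (X i) O) 1, fun a ha => ?_⟩
  have h1 := key a ha
  have h2 := key 1 hone
  have : (∑ i, (N (symmDiff (X i) O) a : ℤ)) = ∑ i, (N (symmDiff (X i) O) 1 : ℤ) := by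
    linarith
  have := this
  rw [← Nat.cast_sum, ← Nat.cast_sum] at this
  exact_mod_cast this
end
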